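/- Let ω_1,…,ω_n be elements of R such that ω_i² = 0 for all i and ω_j ω_i = λ ω_i ω_j for all i < j. Then (ω_1 + ω_2 + ⋯ + ω_n)^n = [n]_λ! · ω_1 ω_2 ⋯ ω_n. -/

import Mathlib

open Finset

noncomputable section

attribute [local instance] Classical.propDecidable

/-- Ordered product `f 0 * f 1 * ... * f (n-1)` of noncommuting elements. -/
def ordProd {R : Type*} [Monoid R] {n : ℕ} (f : Fin n → R) : R :=
  (List.ofFn f).prod

/-- The generalized sign `(−q)_σ` with column labels `cols`:
`(−1)^{ℓ(σ)} ∏_{k<k', σ(k)>σ(k')} q_{cols(σ(k')) cols(σ(k))}`. -/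
def qSign {N t : ℕ} (q : Fin N → Fin N → ℂ) (cols : Fin t → Fin N)
    (σ : Equiv.Perm (Fin t)) : ℂ :=
  ∏ ij ∈ Finset.univ.filter
      (fun ij : Fin t × Fin t => ij.1 < ij.2 ∧ σ ij.2 < σ ij.1),
    (-(q (cols (σ ij.2)) (cols (σ ij.1))))

/-- The quantum minor `det_q(A^{rows}_{cols})`. -/
def qMinor {R : Type*} [Ring R] [Algebra ℂ R] {N t : ℕ}
    (q : Fin N → Fin N → ℂ) (rows cols : Fin t → Fin N)
    (a : Fin N → Fin N → R) : R :=
  ∑ σ : Equiv.Perm (Fin t),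
    qSign q cols σ • ordProd (fun k => a (rows k) (cols (σ k)))

/-- Quantum row determinant `rdet(A) = Σ_σ (−q)_σ a_{1σ(1)} ⋯ a_{nσ(n)}`. -/
def rdet {R : Type*} [Ring R] [Algebra ℂ R] {N : ℕ}
    (q : Fin N → Fin N → ℂ) (a : Fin N → Fin N → R) : R :=
  ∑ σ : Equiv.Perm (Fin N),
    qSign q id σ • ordProd (fun i => a i (σ i))

/-- Quantum column determinant `cdet(A) = Σ_σ (−p)_σ a_{σ(1)1} ⋯ a_{σ(n)n}`. -/
def cdet {R : Type*} [Ring R] [Algebra ℂ R] {N : ℕ}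
    (p : Fin N → Fin N → ℂ) (a : Fin N → Fin N → R) : R :=
  ∑ σ : Equiv.Perm (Fin N),
    qSign p id σ • ordProd (fun i => a (σ i) i)

/-- Conditions on the parameters: they are nonzero, `p_{ii} = q_{ii} = 1`,
and `p_{ij}p_{ji} = q_{ij}q_{ji} = 1`. -/
def ParamConds {N : ℕ} (p q : Fin N → Fin N → ℂ) : Prop :=
  (∀ i j, p i j ≠ 0 ∧ q i j ≠ 0) ∧
  (∀ i, p i i = 1 ∧ q i i = 1) ∧
  (∀ i j, p i j * p j i = 1 ∧ q i j * q j i = 1)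

/-- The `(p,λ)`-condition: `p_{ij} q_{ij} = λ` for `i < j`. -/
def PLambdaCond {N : ℕ} (p q : Fin N → Fin N → ℂ) (lam : ℂ) : Prop :=
  ∀ i j : Fin N, i < j → p i j * q i j = lam

/-- `A = (a_{ij})` is a multiparameter quantum matrix for the parameters `p, q`. -/
def IsQuantumMatrix {R : Type*} [Ring R] [Algebra ℂ R] {N : ℕ}
    (p q : Fin N → Fin N → ℂ) (a : Fin N → Fin N → R) : Prop :=
  (∀ i k l : Fin N, k < l → a i k * a i l = q k l • (a i l * a i k)) ∧
  (∀ i j k : Fin N, i < j → a i k * a j k = p i j • (a j k * a i k)) ∧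
  (∀ i j k l : Fin N, i < j → k < l →
    a i k * a j l - (q k l / q i j) • (a j l * a i k)
      = q k l • (a i l * a j k) - (q i j)⁻¹ • (a j k * a i l)) ∧
  (∀ i j k l : Fin N, i < j → k < l →
    a i k * a j l - (p i j / p k l) • (a j l * a i k)
      = p i j • (a j k * a i l) - (p k l)⁻¹ • (a i l * a j k))

/-- `x_1, …, x_n` satisfy the `q`-exterior relations. -/
def QExterior {R : Type*} [Ring R] [Algebra ℂ R] {N : ℕ}
    (q : Fin N → Fin N → ℂ) (x : Fin N → R) : Prop :=
  (∀ i, x i * x i = 0) ∧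
  (∀ i j : Fin N, i < j → x j * x i = -(q i j) • (x i * x j))

/-- The quantum integer `[k]_λ = 1 + λ + ⋯ + λ^{k−1}`. -/
def qNum (lam : ℂ) (k : ℕ) : ℂ := ∑ i ∈ Finset.range k, lam ^ i

/-- The quantum factorial `[n]_λ! = [1]_λ [2]_λ ⋯ [n]_λ`. -/
def qFact (lam : ℂ) (n : ℕ) : ℂ := ∏ k ∈ Finset.range n, qNum lam (k + 1)

/-- The index `2i−1` (1-based), i.e. position `2i` (0-based), inside `Fin (2n)`. -/
def pfIdx1 {n : ℕ} (i : Fin n) : Fin (2 * n) :=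
  ⟨2 * i.1, by have := i.isLt; omega⟩

/-- The index `2i` (1-based), i.e. position `2i+1` (0-based), inside `Fin (2n)`. -/
def pfIdx2 {n : ℕ} (i : Fin n) : Fin (2 * n) :=
  ⟨2 * i.1 + 1, by have := i.isLt; omega⟩

/-- The multiparameter quantum Pfaffian
`Pf_q(B) = Σ_σ (−q)_σ b_{σ(1)σ(2)} ⋯ b_{σ(2n−1)σ(2n)}`, the sum over
permutations `σ` of `{1,…,2n}` with `σ(2i−1) < σ(2i)` for all `i`. -/
def Pf {R : Type*} [Ring R] [Algebra ℂ R] {n : ℕ}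
    (q : Fin (2 * n) → Fin (2 * n) → ℂ) (b : Fin (2 * n) → Fin (2 * n) → R) : R :=
  ∑ σ ∈ Finset.univ.filter
      (fun σ : Equiv.Perm (Fin (2 * n)) => ∀ i : Fin n, σ (pfIdx1 i) < σ (pfIdx2 i)),
    qSign q id σ • ordProd (fun i : Fin n => b (σ (pfIdx1 i)) (σ (pfIdx2 i)))

/-- Sub-Pfaffian along an index map `f` (typically the increasing enumeration of
a subset of the indices): the parameters and the entries are restricted along `f`. -/
def PfOn {R : Type*} [Ring R] [Algebra ℂ R] {N m : ℕ}
    (q : Fin N → Fin N → ℂ) (b : Fin N → Fin N → R) (f : Fin (2 * m) → Fin N) : R :=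
  Pf (fun i j => q (f i) (f j)) (fun i j => b (f i) (f j))

/-- `inv(I, J) = ∏_{i ∈ I, j ∈ J, i > j} (−q_{ji})`. -/
def invQ {N : ℕ} (q : Fin N → Fin N → ℂ) (I J : Finset (Fin N)) : ℂ :=
  ∏ i ∈ I, ∏ j ∈ J, if j < i then -(q j i) else 1

/-- The position `k·m + r` within `Fin (m·n)`, i.e. the `r`-th index of the
`k`-th block of size `m`. -/
def blockIdx {m n : ℕ} (k : Fin n) (r : Fin m) : Fin (m * n) :=
  ⟨k.1 * m + r.1, by
    have hk : k.1 + 1 ≤ n := k.isLt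
    have hr : r.1 < m := r.isLt
    calc k.1 * m + r.1 < k.1 * m + m := Nat.add_lt_add_left hr _
      _ = (k.1 + 1) * m := (Nat.succ_mul k.1 m).symm
      _ ≤ n * m := Nat.mul_le_mul hk (Nat.le_refl m)
      _ = m * n := Nat.mul_comm n m⟩

/-- The multiparameter quantum hyper-Pfaffian
`Pf_q(B) = Σ_{σ∈Π} (−q)_σ b_{σ(1)…σ(m)} ⋯ b_{σ(m(n−1)+1)…σ(mn)}`, where `Π` is
the set of permutations of `{1,…,mn}` increasing on each consecutive block of
length `m`. -/
def hPf {R : Type*} [Ring R] [Algebra ℂ R] {m n : ℕ}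
    (q : Fin (m * n) → Fin (m * n) → ℂ) (b : (Fin m → Fin (m * n)) → R) : R :=
  ∑ σ ∈ Finset.univ.filter
      (fun σ : Equiv.Perm (Fin (m * n)) =>
        ∀ k : Fin n, StrictMono (fun r : Fin m => σ (blockIdx k r))),
    qSign q id σ • ordProd (fun k : Fin n => b (fun r => σ (blockIdx k r)))

/-- The increasing enumeration of `{1,…,n} \ {k}` (the "hat" of `k`). -/
def hatIdx {n : ℕ} (k : Fin n) (r : Fin (n - 1)) : Fin n :=
  if h : r.1 < k.1 then ⟨r.1, by have := k.isLt; omega⟩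
  else ⟨r.1 + 1, by have := r.isLt; omega⟩

/-- The increasing enumeration of `{s+1,…,n}`. -/
def tailIdx {n : ℕ} (s : ℕ) (k : Fin (n - s)) : Fin n :=
  ⟨s + k.1, by have := k.isLt; omega⟩

/-- The increasing enumeration of `{1,…,t}` inside `{1,…,n}`. -/
def headIdx {n : ℕ} (t : ℕ) (ht : t ≤ n) (k : Fin t) : Fin n :=
  ⟨k.1, lt_of_lt_of_le k.isLt ht⟩

/-- `σ` is a `t`-shuffle: `σ(1) < ⋯ < σ(t)` and `σ(t+1) < ⋯ < σ(n)`. -/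
def IsShuffle {n : ℕ} (t : ℕ) (σ : Equiv.Perm (Fin n)) : Prop :=
  (∀ k l : Fin n, k < l → l.1 < t → σ k < σ l) ∧
  (∀ k l : Fin n, k < l → t ≤ k.1 → σ k < σ l)


/-
Split off the last generator: with `a = ω₀ + ⋯ + ω_{n-2}` and `b = ω_{n-1}` we have `b a = λ a b`
and `b² = 0`, so the λ-binomial expansion collapses to `(a + b)^n = a^n + [n]_λ a^{n-1} b`.
By induction `a^{n-1} = [n-1]_λ! ω₀ ⋯ ω_{n-2}`, and `a^n = 0` because moving any `ω_i` to its
twin in the ordered product `ω₀ ⋯ ω_{n-2}` only costs scalars and then `ω_i² = 0`.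
-/

lemma ordProd_succ {M : Type*} [Monoid M] {n : ℕ} (f : Fin (n + 1) → M) :
    ordProd f = ordProd (fun i : Fin n => f i.castSucc) * f (Fin.last n) := by
  rw [ordProd, List.ofFn_succ', List.prod_concat]
  rfl

lemma qNum_succ (lam : ℂ) (k : ℕ) : qNum lam (k + 1) = 1 + qNum lam k * lam := by
  rw [qNum, qNum, geom_sum_succ, mul_comm, add_comm]

lemma qFact_succ (lam : ℂ) (n : ℕ) : qFact lam (n + 1) = qFact lam n * qNum lam (n + 1) :=
  prod_range_succ _ _

section

variable {R : Type*} [Semiring R] [Algebra ℂ R]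

lemma add_pow_succ_of_mul_eq_smul_of_mul_self_eq_zero {lam : ℂ} {a b : R}
    (hba : b * a = lam • (a * b)) (hbb : b * b = 0) (m : ℕ) :
    (a + b) ^ (m + 1) = a ^ (m + 1) + qNum lam (m + 1) • (a ^ m * b) := by
  induction m with
  | zero => simp [qNum]
  | succ k ih =>
    have hb_pow : a ^ k * b * a = lam • (a ^ (k + 1) * b) := by
      rw [mul_assoc, hba, mul_smul_comm, ← mul_assoc, ← pow_succ]
    rw [pow_succ, ih, add_mul, mul_add, mul_add, smul_mul_assoc, smul_mul_assoc, hb_pow,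
      mul_assoc _ b b, hbb, mul_zero, smul_zero, add_zero, ← pow_succ, smul_smul,
      qNum_succ lam (k + 1), add_smul, one_smul, add_assoc]

lemma ordProd_mul_eq_zero {lam : ℂ} {n : ℕ} {f : Fin n → R} (h0 : ∀ i, f i * f i = 0)
    (hcomm : ∀ i j : Fin n, i < j → f j * f i = lam • (f i * f j)) (i : Fin n) :
    ordProd f * f i = 0 := by
  induction n with
  | zero => exact i.elim0
  | succ m ih =>
    rw [ordProd_succ, mul_assoc]
    rcases Fin.eq_castSucc_or_eq_last i with ⟨j, rfl⟩ | rfl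
    · have hinit : ordProd (fun i : Fin m => f i.castSucc) * f j.castSucc = 0 :=
        ih (fun _ => h0 _) (fun k l hkl => hcomm _ _ (Fin.castSucc_lt_castSucc_iff.2 hkl)) j
      rw [hcomm _ _ j.castSucc_lt_last, mul_smul_comm, ← mul_assoc, hinit, zero_mul, smul_zero]
    · rw [h0, mul_zero]

lemma ordProd_mul_sum_eq_zero {lam : ℂ} {n : ℕ} {f : Fin n → R} (h0 : ∀ i, f i * f i = 0)
    (hcomm : ∀ i j : Fin n, i < j → f j * f i = lam • (f i * f j)) :
    ordProd f * ∑ i, f i = 0 := by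
  rw [mul_sum]
  exact sum_eq_zero fun i _ => ordProd_mul_eq_zero h0 hcomm i

end

theorem sum_pow_eq_qFact_smul_prod_general {R : Type*} [Ring R] [Algebra ℂ R]
    {n : ℕ} (lam : ℂ)
    (ω : Fin n → R) (h0 : ∀ i, ω i * ω i = 0)
    (hcomm : ∀ i j : Fin n, i < j → ω j * ω i = lam • (ω i * ω j)) :
    (∑ i, ω i) ^ n = qFact lam n • ordProd ω := by
  induction n with
  | zero => simp [qFact, ordProd]
  | succ m ih =>
    set ω' : Fin m → R := fun i => ω i.castSucc
    set a : R := ∑ i, ω' i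
    have h0' : ∀ i, ω' i * ω' i = 0 := fun i => h0 _
    have hcomm' : ∀ i j : Fin m, i < j → ω' j * ω' i = lam • (ω' i * ω' j) :=
      fun i j hij => hcomm _ _ (Fin.castSucc_lt_castSucc_iff.2 hij)
    have hlast : ω (Fin.last m) * a = lam • (a * ω (Fin.last m)) := by
      simp only [a, mul_sum, sum_mul, smul_sum]
      exact sum_congr rfl fun i _ => hcomm _ _ i.castSucc_lt_last
    have hpow : a ^ m = qFact lam m • ordProd ω' := ih ω' h0' hcomm'
    have hpow_succ : a ^ (m + 1) = 0 := by
      rw [pow_succ, hpow, smul_mul_assoc, ordProd_mul_sum_eq_zero h0' hcomm', smul_zero]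
    rw [Fin.sum_univ_castSucc, add_pow_succ_of_mul_eq_smul_of_mul_self_eq_zero hlast (h0 _),
      hpow_succ, zero_add, hpow, smul_mul_assoc, smul_smul, ← ordProd_succ, qFact_succ, mul_comm]

/-- If `ω_i² = 0` and `ω_j ω_i = λ ω_i ω_j` for `i < j`, then
`(ω_1 + ⋯ + ω_n)^n = [n]_λ! · ω_1 ω_2 ⋯ ω_n`. -/
theorem sum_pow_eq_qFact_smul_prod {R : Type*} [Ring R] [Algebra ℂ R]
    {n : ℕ} (hn : 1 ≤ n) (lam : ℂ)
    (ω : Fin n → R) (h0 : ∀ i, ω i * ω i = 0)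
    (hcomm : ∀ i j : Fin n, i < j → ω j * ω i = lam • (ω i * ω j)) :
    (∑ i, ω i) ^ n = qFact lam n • ordProd ω :=
  sum_pow_eq_qFact_smul_prod_general lam ω h0 hcomm
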